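/- Let f, h⁰, h¹, h², h³ : ℝ⁴ → ℝ be differentiable with f(x) ≠ 0 for all x and with the normalization f(x)² + Σ_{μ=0}^{3} η_{μμ}·(h^μ(x))² = 1 for all x. Define ψ(x) := f(x)·1 + Σ_{μ=0}^{3} h^μ(x)·e_μ e₅, H_α^{μ5} := 2f²·∂_α( h^μ / f ), and ω_α^{μν} := (1/f)·( H_α^{μ5}·h^ν − H_α^{ν5}·h^μ ). Then reverse(ψ)·ψ = 1 everywhere, and ψ satisfies the Killing spin field equation with these coefficients and with all other coefficients zero; that is, for every α ∈ {0,1,2,3}: ∂_αψ = ( (1/4)·Σ_{μ,ν=0}^{3} ω_α^{μν}·e_μ e_ν + (1/2)·Σ_{μ=0}^{3} H_α^{μ5}·e_μ e₅ )·ψ. (Spin fields of the type f + f^{μ5}e_μe₅ solve the Killing spin field equation, with extrinsic curvature only in the e₅-direction and vanishing normal connection.) -/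

import Mathlib

/-!
Write `K(b) := Σ_μ b_μ e_μ e₅ = ι(b) e₅` for `b ∈ ℝ⁴` embedded in the first four coordinates.
Since `e₅² = 1` and `e₅` anticommutes with `ι(b)`, `reverse K(b) = -K(b)` and
`K(b) K(c) = -ι(b) ι(c)`, so `K(b) K(c) + K(c) K(b) = -2⟨b, c⟩_η`. Hence
`reverse ψ · ψ = f² + ⟨h, h⟩_η = 1`, so `∂ψ = (∂ψ · reverse ψ) ψ`, and expanding `∂ψ · reverse ψ`
with the differentiated normalization `f ∂f + ⟨h, ∂h⟩_η = 0` gives the connection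
`½ [K(h), K(∂h)] + K(f ∂h - ∂f h)`. This is the claimed one, because
`H^{μ5} = 2 (f ∂h^μ - h^μ ∂f)` and `ω^{μν} = 2 (∂h^μ h^ν - ∂h^ν h^μ)`.
-/

open CliffordAlgebra

noncomputable section

/-- The Minkowski signs `(-1,1,…,1)` on `ℝ^{10}`. -/
def ηv : Fin 10 → ℝ := fun I => if I = 0 then -1 else 1

/-- The Minkowski metric `η = diag(-1,1,…,1)` as a matrix. -/
def ηm : Fin 10 → Fin 10 → ℝ := fun I J => if I = J then ηv I else 0

/-- The Minkowski quadratic form `Q(x) = -x₀² + x₁² + ⋯ + x₉²` on `ℝ^{10}`. -/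
def Qm : QuadraticForm ℝ (Fin 10 → ℝ) := QuadraticMap.weightedSumSquares ℝ ηv

/-- The Clifford algebra of the Minkowski form on `ℝ^{10}`. -/
abbrev Cl := CliffordAlgebra Qm

/-- The images `e_I` of the standard basis vectors of `ℝ^{10}` in `Cl`. -/
def e (I : Fin 10) : Cl := ι Qm (Pi.single I 1)

/-- Inclusion of tangent indices `{0,…,3}` into `{0,…,9}`. -/
def tIdx (μ : Fin 4) : Fin 10 := ⟨μ.1, by omega⟩

/-- Inclusion of normal indices `{4,…,9}` into `{0,…,9}`. -/
def nIdx (i : Fin 6) : Fin 10 := ⟨i.1 + 4, by omega⟩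

/-- The spin field `ψ = f·1 + Σ_μ h^μ·e_μe₅`. -/
def ψA (f : (Fin 4 → ℝ) → ℝ) (h : Fin 4 → (Fin 4 → ℝ) → ℝ) (x : Fin 4 → ℝ) : Cl :=
  f x • (1 : Cl) + ∑ μ : Fin 4, h μ x • (e (tIdx μ) * e 5)

/-- The extrinsic curvature `H_α^{μ5} = 2f²·∂_α(h^μ/f)`. -/
def HA (f : (Fin 4 → ℝ) → ℝ) (h : Fin 4 → (Fin 4 → ℝ) → ℝ)
    (α μ : Fin 4) (x : Fin 4 → ℝ) : ℝ :=
  2 * (f x) ^ 2 * fderiv ℝ (fun y => h μ y / f y) x (Pi.single α 1)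

/-- The connection `ω_α^{μν} = (1/f)·(H_α^{μ5}h^ν − H_α^{ν5}h^μ)`. -/
def ωA (f : (Fin 4 → ℝ) → ℝ) (h : Fin 4 → (Fin 4 → ℝ) → ℝ)
    (α μ ν : Fin 4) (x : Fin 4 → ℝ) : ℝ :=
  (1 / f x) * (HA f h α μ x * h ν x - HA f h α ν x * h μ x)

section CliffordIdentities

variable {R M : Type*} [CommRing R] [AddCommGroup M] [Module R M] {Q : QuadraticForm R M}

theorem ι_mul_ι_mul_ι_mul_ι_of_isOrtho {u v w : M} (hu : Q u = 1) (huw : Q.IsOrtho u w) :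
    ι Q v * ι Q u * (ι Q w * ι Q u) = -(ι Q v * ι Q w) := by
  rw [mul_assoc, ← mul_assoc (ι Q u), ι_mul_ι_comm_of_isOrtho huw, neg_mul, mul_assoc,
    ι_sq_scalar, hu, map_one, mul_one, mul_neg]

theorem reverse_ι_mul_ι_of_isOrtho {u v : M} (huv : Q.IsOrtho u v) :
    reverse (ι Q v * ι Q u) = -(ι Q v * ι Q u) := by
  rw [reverse.map_mul, reverse_ι, reverse_ι, ι_mul_ι_comm_of_isOrtho huv]

end CliffordIdentities

theorem smul_one_add_eq_mul_of_mul_add_swap {A : Type*} [Ring A] [Algebra ℝ A] {a a' : ℝ}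
    {K K' : A} (hunit : (a • 1 - K) * (a • 1 + K) = 1)
    (hanti : K' * K + K * K' = (2 * (a * a')) • 1) :
    a' • 1 + K' = ((1 / 2 : ℝ) • (K * K' - K' * K) + (a • K' - a' • K)) * (a • 1 + K) := by
  have hKK : K' * K = (2 * (a * a')) • 1 - K * K' := eq_sub_of_add_eq hanti
  have hinv : (a' • 1 + K') * (a • 1 - K)
      = (1 / 2 : ℝ) • (K * K' - K' * K) + (a • K' - a' • K) := by
    simp only [add_mul, mul_sub, one_mul, mul_one, smul_mul_assoc, mul_smul_comm]
    rw [hKK]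
    module
  rw [← hinv, mul_assoc, hunit, mul_one]

def tVec (b : Fin 4 → ℝ) : Fin 10 → ℝ := ∑ μ, b μ • Pi.single (tIdx μ) 1

theorem ι_tVec (b : Fin 4 → ℝ) : ι Qm (tVec b) = ∑ μ, b μ • e (tIdx μ) := by
  simp [tVec, e]

theorem Qm_tVec (b : Fin 4 → ℝ) : Qm (tVec b) = ∑ μ, ηv (tIdx μ) * b μ ^ 2 := by
  simp [Qm, QuadraticMap.weightedSumSquares_apply, tVec, Fin.sum_univ_succ, tIdx, ηv,
    Pi.single_apply, sq]

theorem polar_Qm_tVec (b c : Fin 4 → ℝ) :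
    QuadraticMap.polar Qm (tVec b) (tVec c) = 2 * ∑ μ, ηv (tIdx μ) * (b μ * c μ) := by
  simp [QuadraticMap.polar, Qm, QuadraticMap.weightedSumSquares_apply, tVec, Fin.sum_univ_succ,
    tIdx, ηv, Pi.single_apply]
  ring

theorem Qm_single_five : Qm (Pi.single 5 1) = 1 := by
  simp [Qm, QuadraticMap.weightedSumSquares_apply, ηv, Pi.single_apply]

theorem isOrtho_single_five_tVec (b : Fin 4 → ℝ) : Qm.IsOrtho (Pi.single 5 1) (tVec b) := by
  simp [QuadraticMap.isOrtho_def, Qm, QuadraticMap.weightedSumSquares_apply, tVec,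
    Fin.sum_univ_succ, tIdx, ηv, Pi.single_apply]
  ring

theorem sum_smul_e_mul_e5 (b : Fin 4 → ℝ) :
    ∑ μ, b μ • (e (tIdx μ) * e 5) = ι Qm (tVec b) * e 5 := by
  simp only [ι_tVec, Finset.sum_mul, smul_mul_assoc]

theorem sum_sum_smul_e_mul_e (b c : Fin 4 → ℝ) :
    ∑ μ, ∑ ν, (b μ * c ν) • (e (tIdx μ) * e (tIdx ν)) = ι Qm (tVec b) * ι Qm (tVec c) := by
  simp only [ι_tVec, Finset.sum_mul_sum, smul_mul_smul_comm]

theorem ι_tVec_mul_e5_mul_ι_tVec_mul_e5 (b c : Fin 4 → ℝ) :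
    ι Qm (tVec b) * e 5 * (ι Qm (tVec c) * e 5) = -(ι Qm (tVec b) * ι Qm (tVec c)) :=
  ι_mul_ι_mul_ι_mul_ι_of_isOrtho Qm_single_five (isOrtho_single_five_tVec c)

theorem reverse_smul_one_add_sum (a : ℝ) (b : Fin 4 → ℝ) :
    reverse (a • (1 : Cl) + ∑ μ, b μ • (e (tIdx μ) * e 5))
      = a • 1 - ∑ μ, b μ • (e (tIdx μ) * e 5) := by
  rw [sum_smul_e_mul_e5, map_add, map_smul, reverse.map_one, e,
    reverse_ι_mul_ι_of_isOrtho (isOrtho_single_five_tVec b), sub_eq_add_neg]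

theorem smul_one_sub_sum_mul_smul_one_add_sum (a : ℝ) (b : Fin 4 → ℝ) :
    (a • (1 : Cl) - ∑ μ, b μ • (e (tIdx μ) * e 5)) * (a • 1 + ∑ μ, b μ • (e (tIdx μ) * e 5))
      = (a ^ 2 + ∑ μ, ηv (tIdx μ) * b μ ^ 2) • 1 := by
  simp only [sum_smul_e_mul_e5, sub_mul, mul_add, one_mul, mul_one, smul_mul_assoc, mul_smul_comm,
    ι_tVec_mul_e5_mul_ι_tVec_mul_e5, ι_sq_scalar, Qm_tVec, Algebra.algebraMap_eq_smul_one]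
  module

theorem sum_smul_e_mul_e5_mul_add_swap (b c : Fin 4 → ℝ) :
    (∑ μ, b μ • (e (tIdx μ) * e 5)) * ∑ μ, c μ • (e (tIdx μ) * e 5)
      + (∑ μ, c μ • (e (tIdx μ) * e 5)) * ∑ μ, b μ • (e (tIdx μ) * e 5)
      = (-(2 * ∑ μ, ηv (tIdx μ) * (b μ * c μ))) • 1 := by
  rw [sum_smul_e_mul_e5, sum_smul_e_mul_e5, ι_tVec_mul_e5_mul_ι_tVec_mul_e5,
    ι_tVec_mul_e5_mul_ι_tVec_mul_e5, ← neg_add, ι_mul_ι_add_swap, polar_Qm_tVec,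
    Algebra.algebraMap_eq_smul_one, neg_smul]

theorem killing_identity {a a' : ℝ} {b b' : Fin 4 → ℝ}
    (hnorm : a ^ 2 + ∑ μ, ηv (tIdx μ) * b μ ^ 2 = 1)
    (hc : a * a' + ∑ μ, ηv (tIdx μ) * (b μ * b' μ) = 0) :
    a' • (1 : Cl) + ∑ μ, b' μ • (e (tIdx μ) * e 5) =
      ((1 / 4 : ℝ) • ∑ μ, ∑ ν, (2 * (b' μ * b ν - b' ν * b μ)) • (e (tIdx μ) * e (tIdx ν))
        + (1 / 2 : ℝ) • ∑ μ, (2 * (a * b' μ - b μ * a')) • (e (tIdx μ) * e 5))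
        * (a • 1 + ∑ μ, b μ • (e (tIdx μ) * e 5)) := by
  have hunit := smul_one_sub_sum_mul_smul_one_add_sum a b
  rw [hnorm, one_smul] at hunit
  have hanti := sum_smul_e_mul_e5_mul_add_swap b b'
  rw [add_comm, show -(2 * ∑ μ, ηv (tIdx μ) * (b μ * b' μ)) = 2 * (a * a') by linarith] at hanti
  have hω : ∑ μ, ∑ ν, (2 * (b' μ * b ν - b' ν * b μ)) • (e (tIdx μ) * e (tIdx ν))
      = (2 : ℝ) • (ι Qm (tVec b') * ι Qm (tVec b) - ι Qm (tVec b) * ι Qm (tVec b')) := by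
    simp only [← sum_sum_smul_e_mul_e, Finset.smul_sum, ← Finset.sum_sub_distrib, smul_smul,
      ← sub_smul]
    refine Finset.sum_congr rfl fun μ _ => Finset.sum_congr rfl fun ν _ => ?_
    congr 1
    ring
  have hH : ∑ μ, (2 * (a * b' μ - b μ * a')) • (e (tIdx μ) * e 5)
      = (2 : ℝ) • (a • ∑ μ, b' μ • (e (tIdx μ) * e 5) - a' • ∑ μ, b μ • (e (tIdx μ) * e 5)) := by
    simp only [Finset.smul_sum, ← Finset.sum_sub_distrib, smul_smul, ← sub_smul]
    refine Finset.sum_congr rfl fun μ _ => ?_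
    congr 1
    ring
  rw [smul_one_add_eq_mul_of_mul_add_swap hunit hanti, hω, hH]
  congr 1
  simp only [sum_smul_e_mul_e5, ι_tVec_mul_e5_mul_ι_tVec_mul_e5]
  module

section Derivatives

variable {E : Type*} [NormedAddCommGroup E] [NormedSpace ℝ E]

theorem sq_mul_fderiv_div_apply {f g : E → ℝ} {x : E} (hf : DifferentiableAt ℝ f x)
    (hg : DifferentiableAt ℝ g x) (hx : f x ≠ 0) (v : E) :
    f x ^ 2 * fderiv ℝ (fun y => g y / f y) x v = f x * fderiv ℝ g x v - g x * fderiv ℝ f x v := by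
  have hinv : HasFDerivAt (fun y => (f y)⁻¹) _ x := (hasFDerivAt_inv hx).comp x hf.hasFDerivAt
  simp only [div_eq_mul_inv]
  rw [(hg.hasFDerivAt.fun_mul hinv).fderiv]
  simp only [add_apply, smul_apply, ContinuousLinearMap.comp_apply,
    ContinuousLinearMap.toSpanSingleton_apply, smul_eq_mul]
  field_simp
  ring

theorem mul_fderiv_add_sum_eq_zero_of_sq_add_sum_sq_eq {ι : Type*} [Fintype ι] {f : E → ℝ}
    {g : ι → E → ℝ} {w : ι → ℝ} {c : ℝ} {x : E} (hf : DifferentiableAt ℝ f x)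
    (hg : ∀ i, DifferentiableAt ℝ (g i) x) (hc : ∀ y, f y ^ 2 + ∑ i, w i * g i y ^ 2 = c)
    (v : E) : f x * fderiv ℝ f x v + ∑ i, w i * (g i x * fderiv ℝ (g i) x v) = 0 := by
  have hF := (hf.hasFDerivAt.pow 2).fun_add
    (HasFDerivAt.fun_sum (u := Finset.univ) fun i _ => ((hg i).hasFDerivAt.pow 2).const_mul (w i))
  rw [show (fun y => f y ^ 2 + ∑ i, w i * g i y ^ 2) = fun _ => c from funext hc] at hF
  have h0 := congrArg (fun L => L v) (hF.unique (hasFDerivAt_const c x))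
  simp only [Nat.add_one_sub_one, pow_one, nsmul_eq_mul, Nat.cast_ofNat, add_apply, smul_apply,
    sum_apply, zero_apply, smul_eq_mul] at h0
  have h2 : 2 * (f x * fderiv ℝ f x v + ∑ i, w i * (g i x * fderiv ℝ (g i) x v)) = 0 := by
    rw [← h0, mul_add, Finset.mul_sum]
    congr 1
    · ring
    · exact Finset.sum_congr rfl fun i _ => by ring
  simpa using h2

end Derivatives

section Coefficients

variable {f : (Fin 4 → ℝ) → ℝ} {h : Fin 4 → (Fin 4 → ℝ) → ℝ} {x : Fin 4 → ℝ}

theorem HA_eq (hf : DifferentiableAt ℝ f x) (hh : ∀ μ, DifferentiableAt ℝ (h μ) x) (hx : f x ≠ 0)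
    (α μ : Fin 4) :
    HA f h α μ x = 2 * (f x * fderiv ℝ (h μ) x (Pi.single α 1)
      - h μ x * fderiv ℝ f x (Pi.single α 1)) := by
  rw [HA, mul_assoc, sq_mul_fderiv_div_apply hf (hh μ) hx]

theorem ωA_eq (hf : DifferentiableAt ℝ f x) (hh : ∀ μ, DifferentiableAt ℝ (h μ) x) (hx : f x ≠ 0)
    (α μ ν : Fin 4) :
    ωA f h α μ ν x = 2 * (fderiv ℝ (h μ) x (Pi.single α 1) * h ν x
      - fderiv ℝ (h ν) x (Pi.single α 1) * h μ x) := by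
  rw [ωA, HA_eq hf hh hx, HA_eq hf hh hx]
  field_simp
  ring

end Coefficients

/-- Spin fields of the type `f + Σ_μ f^{μ5}e_μe₅` are normalized and solve the Killing
spin field equation, with extrinsic curvature only in the `e₅`-direction, vanishing normal
connection, and the stated connection coefficients. -/
theorem stmt_8 (nCl : AddGroupNorm Cl)
    (hns : ∀ (c : ℝ) (x : Cl), nCl (c • x) ≤ ‖c‖ * nCl x) :
    letI : NormedAddCommGroup Cl := nCl.toNormedAddCommGroup
    letI : NormedSpace ℝ Cl := { norm_smul_le := hns }
    ∀ (f : (Fin 4 → ℝ) → ℝ) (h : Fin 4 → (Fin 4 → ℝ) → ℝ),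
      Differentiable ℝ f →
      (∀ μ, Differentiable ℝ (h μ)) →
      (∀ x, f x ≠ 0) →
      (∀ x, (f x) ^ 2 + ∑ μ : Fin 4, ηv (tIdx μ) * (h μ x) ^ 2 = 1) →
      (∀ x, reverse (Q := Qm) (ψA f h x) * ψA f h x = 1) ∧
      Differentiable ℝ (ψA f h) ∧
      ∀ (α : Fin 4) (x : Fin 4 → ℝ),
        fderiv ℝ (ψA f h) x (Pi.single α 1) =
          ((1/4 : ℝ) • ∑ μ : Fin 4, ∑ ν : Fin 4, ωA f h α μ ν x • (e (tIdx μ) * e (tIdx ν))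
            + (1/2 : ℝ) • ∑ μ : Fin 4, HA f h α μ x • (e (tIdx μ) * e 5)) * ψA f h x := by
  let : NormedAddCommGroup Cl := nCl.toNormedAddCommGroup
  let : NormedSpace ℝ Cl := { norm_smul_le := hns }
  intro f h hf hh hf0 hnorm
  have hψ : ∀ x, HasFDerivAt (ψA f h)
      ((fderiv ℝ f x).smulRight (1 : Cl)
        + ∑ μ, (fderiv ℝ (h μ) x).smulRight (e (tIdx μ) * e 5)) x := fun x =>
    ((hf x).hasFDerivAt.smul_const (1 : Cl)).add
      (HasFDerivAt.fun_sum fun μ _ => (hh μ x).hasFDerivAt.smul_const _)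
  refine ⟨fun x => ?_, fun x => (hψ x).differentiableAt, fun α x => ?_⟩
  · rw [ψA, reverse_smul_one_add_sum, smul_one_sub_sum_mul_smul_one_add_sum, hnorm, one_smul]
  · simp only [(hψ x).fderiv, add_apply, FunLike.coe_sum, Finset.sum_apply,
      ContinuousLinearMap.smulRight_apply, ψA, ωA_eq (hf x) (fun μ => hh μ x) (hf0 x),
      HA_eq (hf x) (fun μ => hh μ x) (hf0 x)]
    exact killing_identity (hnorm x)
      (mul_fderiv_add_sum_eq_zero_of_sq_add_sum_sq_eq (hf x) (fun μ => hh μ x) hnorm _)
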